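/- (Local complementation by local unitaries.) Let G be a finite simple graph on Fin n and i a vertex. Let τ_i(G) be the graph whose edge set is the symmetric difference of E(G) with the set of all unordered pairs of distinct neighbors of i (local complementation at i). Let U = ((I − i·X_i)/√2) · ∏_{j ∈ N(i)} ((I + i·Z_j)/√2), where the factors act on single qubits as indicated. Then U |G⟩⟨G| U† = |τ_i(G)⟩⟨τ_i(G)|, i.e. U|G⟩ equals the graph state |τ_i(G)⟩ up to a global phase. -/

import Mathlib

open Matrix
open scoped BigOperators

noncomputable section

/-- `(-1)^c` as a complex number, for `c : ZMod 2`. -/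
def sgn (c : ZMod 2) : ℂ := if c = 0 then 1 else -1

/-- Pauli `X = !![0,1;1,0]`, indexed by `ZMod 2`. -/
def PX : Matrix (ZMod 2) (ZMod 2) ℂ := fun a b => if a = b then 0 else 1

/-- Pauli `Y = !![0,−i;i,0]`, indexed by `ZMod 2`. -/
def PY : Matrix (ZMod 2) (ZMod 2) ℂ :=
  fun a b => if a = b then 0 else if a = 0 then -Complex.I else Complex.I

/-- Pauli `Z = !![1,0;0,−1]`, indexed by `ZMod 2`. -/
def PZ : Matrix (ZMod 2) (ZMod 2) ℂ := fun a b => if a = b then sgn a else 0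

/-- The tensor (Kronecker) product over all qubits of a family of single-qubit
operators: the `(x, y)` entry is `∏ i, (f i) (x i) (y i)`. -/
def tensorOp {V : Type*} [Fintype V] (f : V → Matrix (ZMod 2) (ZMod 2) ℂ) :
    Matrix (V → ZMod 2) (V → ZMod 2) ℂ :=
  fun x y => ∏ i, f i (x i) (y i)

/-- The operator acting as `A` on qubit `i` and as the identity on all other qubits. -/
def localOp {V : Type*} [Fintype V] [DecidableEq V] (i : V)
    (A : Matrix (ZMod 2) (ZMod 2) ℂ) : Matrix (V → ZMod 2) (V → ZMod 2) ℂ :=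
  tensorOp (fun j => if j = i then A else 1)

/-- `Σ_{{i,j} ∈ E(G)} x_i x_j`, as an element of `ZMod 2`. -/
def edgePhase {V : Type*} [Fintype V] [DecidableEq V] (G : SimpleGraph V)
    [DecidableRel G.Adj] (x : V → ZMod 2) : ZMod 2 :=
  ∑ e ∈ G.edgeFinset, Sym2.lift ⟨fun i j => x i * x j, fun _ _ => mul_comm _ _⟩ e

/-- The graph state `|G⟩`, with amplitudes `⟨x|G⟩ = 2^{-n/2}·(−1)^{Σ_{{i,j}∈E(G)} x_i x_j}`. -/
def graphState {V : Type*} [Fintype V] [DecidableEq V] (G : SimpleGraph V)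
    [DecidableRel G.Adj] : (V → ZMod 2) → ℂ :=
  fun x => (Real.sqrt 2 : ℂ)⁻¹ ^ (Fintype.card V) * sgn (edgePhase G x)

/-- The entangling unitary `U_G = ∏_{{i,j} ∈ E(G)} CZ_{i,j}`: the diagonal matrix with
`(x,x)` entry `(−1)^{Σ_{{i,j}∈E(G)} x_i x_j}`. -/
def entangler {V : Type*} [Fintype V] [DecidableEq V] (G : SimpleGraph V)
    [DecidableRel G.Adj] : Matrix (V → ZMod 2) (V → ZMod 2) ℂ :=
  Matrix.diagonal (fun x => sgn (edgePhase G x))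

/-- The correlation operator `K_i = X_i ∏_{j ∈ N(i)} Z_j`. -/
def corrOp {V : Type*} [Fintype V] [DecidableEq V] (G : SimpleGraph V)
    [DecidableRel G.Adj] (i : V) : Matrix (V → ZMod 2) (V → ZMod 2) ℂ :=
  tensorOp (fun j => if j = i then PX else if G.Adj i j then PZ else 1)

/-- `Z^r = ∏_i Z_i^{r_i}` for `r ∈ (ZMod 2)^V`. -/
def Zop {V : Type*} [Fintype V] (r : V → ZMod 2) :
    Matrix (V → ZMod 2) (V → ZMod 2) ℂ :=
  tensorOp (fun i => PZ ^ (r i).val)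

/-- The rank-one outer product `|ψ⟩⟨ψ|`. -/
def outer {α : Type*} (ψ : α → ℂ) : Matrix α α ℂ := fun x y => ψ x * star (ψ y)


/-- Local complementation `τ_i(G)`: the edge set is the symmetric difference of `E(G)`
with the set of all unordered pairs of distinct neighbors of `i`. -/
def localComp {V : Type*} (G : SimpleGraph V) (i : V) : SimpleGraph V where
  Adj a b := Xor' (G.Adj a b) (a ≠ b ∧ G.Adj i a ∧ G.Adj i b)
  symm := by
    constructor
    intro a b h
    have hg : G.Adj a b ↔ G.Adj b a := G.adj_comm a b
    have hn : a ≠ b ↔ b ≠ a := ne_comm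
    unfold Xor' at h ⊢
    unfold Xor at h ⊢
    tauto
  loopless := by
    constructor
    intro a
    simp [Xor']

instance {V : Type*} [DecidableEq V] (G : SimpleGraph V) [DecidableRel G.Adj] (i : V) :
    DecidableRel (localComp G i).Adj := fun a b =>
  show Decidable (Xor' (G.Adj a b) (a ≠ b ∧ G.Adj i a ∧ G.Adj i b)) by
    unfold Xor'; infer_instance

/-- The local unitary `U = ((I − i·X_i)/√2) · ∏_{j ∈ N(i)} ((I + i·Z_j)/√2)`
implementing local complementation at `i`. -/
def localCompU {V : Type*} [Fintype V] [DecidableEq V] (G : SimpleGraph V)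
    [DecidableRel G.Adj] (i : V) : Matrix (V → ZMod 2) (V → ZMod 2) ℂ :=
  tensorOp (fun j =>
    if j = i then (Real.sqrt 2 : ℂ)⁻¹ • (1 - Complex.I • PX)
    else if G.Adj i j then (Real.sqrt 2 : ℂ)⁻¹ • (1 + Complex.I • PZ)
    else 1)


open Finset
open Complex (I)

/-!
Write `m(x)` for the number of neighbours `j` of `i` with `x j = 1`. Changing `x i` to `t`
changes the edge phase of `G` by `(t - x i) * m(x)`, so the mixing factor `(I - i X_i)/√2`
sends the amplitude `(-1)^{E(x)}` to `(-1)^{E(x)} (1 - i (-1)^{m(x)}) / √2`, while the diagonal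
factors `(I + i Z_j)/√2` contribute `((1 + i)/√2)^{|N(i)|} (-i)^{m(x)}`. The identity
`(-i)^m (1 - i (-1)^m) = (1 - i) (-1)^{C(m,2)}` then turns the result into a unit multiple of
`(-1)^{E(x) + C(m,2)}`: local complementation toggles every pair of neighbours of `i`, and
exactly `C(m,2)` of these pairs have both ends in the support of `x`, so the edge phase of
`τ_i(G)` at `x` is `E(x) + C(m,2)`.
-/

lemma mul_outer_mul_conjTranspose {α : Type*} [Fintype α] (M : Matrix α α ℂ) (ψ : α → ℂ) :
    M * outer ψ * Mᴴ = outer (M *ᵥ ψ) := by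
  ext x z
  simp only [mul_apply, outer, conjTranspose_apply, mulVec, dotProduct, sum_mul,
    mul_sum, star_sum, star_mul']
  exact sum_congr rfl fun _ _ => sum_congr rfl fun _ _ => by ring

lemma outer_smul_of_star_mul_self {α : Type*} {c : ℂ} (hc : star c * c = 1) (ψ : α → ℂ) :
    outer (c • ψ) = outer ψ := by
  ext x z
  simp only [outer, Pi.smul_apply, smul_eq_mul, star_mul']
  linear_combination ψ x * star (ψ z) * hc

lemma tensorOp_mulVec_of_forall_ne_diagonal {V : Type*} [Fintype V] [DecidableEq V]
    (f : V → Matrix (ZMod 2) (ZMod 2) ℂ) (i : V) (δ : V → ZMod 2 → ℂ)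
    (hf : ∀ j ≠ i, f j = diagonal (δ j)) (ψ : (V → ZMod 2) → ℂ) (x : V → ZMod 2) :
    (tensorOp f *ᵥ ψ) x
      = (∏ j ∈ univ.erase i, δ j (x j)) * ∑ t, f i (x i) t * ψ (Function.update x i t) := by
  have hoff : ∀ y ∉ univ.image (Function.update x i), tensorOp f x y * ψ y = 0 := by
    intro y hy
    obtain ⟨j, hji, hj⟩ : ∃ j ≠ i, x j ≠ y j := by
      by_contra! h
      refine hy (mem_image.mpr ⟨y i, mem_univ _, funext fun j => ?_⟩)
      by_cases hji : j = i
      · subst hji; simp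
      · rw [Function.update_of_ne hji, h j hji]
    rw [tensorOp, prod_eq_zero (mem_univ j) (by rw [hf j hji, diagonal_apply_ne _ hj]),
      zero_mul]
  rw [mulVec, dotProduct, ← sum_subset (subset_univ _) fun y _ => hoff y,
    sum_image fun _ _ _ _ h => Function.update_injective x i h, mul_sum]
  refine sum_congr rfl fun t _ => ?_
  rw [tensorOp, ← mul_prod_erase _ _ (mem_univ i), Function.update_self]
  have hrest : ∏ j ∈ univ.erase i, f j (x j) (Function.update x i t j)
      = ∏ j ∈ univ.erase i, δ j (x j) :=
    prod_congr rfl fun j hj => by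
      rw [Function.update_of_ne (ne_of_mem_erase hj), hf j (ne_of_mem_erase hj),
        diagonal_apply_eq]
  rw [hrest]
  ring

lemma zmod_two_cases (a : ZMod 2) : a = 0 ∨ a = 1 := by
  revert a; decide

lemma sum_zmod_two_eq_card_filter {α : Type*} (s : Finset α) (x : α → ZMod 2) :
    ∑ j ∈ s, x j = #{j ∈ s | x j = 1} := by
  rw [natCast_card_filter]
  exact sum_congr rfl fun j _ => by rcases zmod_two_cases (x j) with h | h <;> simp [h]

lemma sgn_add (a b : ZMod 2) : sgn (a + b) = sgn a * sgn b := by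
  rcases zmod_two_cases a with rfl | rfl <;> rcases zmod_two_cases b with rfl | rfl <;>
    simp +decide [sgn]

lemma sgn_natCast (m : ℕ) : sgn m = (-1) ^ m := by
  induction m with
  | zero => simp [sgn]
  | succ m ih => rw [Nat.cast_succ, sgn_add, ih, pow_succ]; simp [sgn]

lemma sum_symmDiff {α R : Type*} [DecidableEq α] [Ring R] [CharP R 2] (s t : Finset α)
    (f : α → R) : ∑ a ∈ symmDiff s t, f a = ∑ a ∈ s, f a + ∑ a ∈ t, f a := by
  have h := sum_sdiff (f := f) (inter_subset_union : s ∩ t ⊆ s ∪ t)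
  rw [symmDiff_eq_sup_sdiff_inf, ← sum_union_inter]
  show ∑ a ∈ (s ∪ t) \ (s ∩ t), f a = _
  rw [← h, add_assoc, CharTwo.add_self_eq_zero, add_zero]

lemma Sym2.mem_image_offDiag_iff {α : Type*} [DecidableEq α] {s : Finset α} {e : Sym2 α} :
    e ∈ s.offDiag.image Sym2.mk.uncurry ↔ ¬ e.IsDiag ∧ ∀ a ∈ e, a ∈ s := by
  induction e using Sym2.ind with
  | _ a b =>
    simp only [mem_image, mem_offDiag, Prod.exists, Function.uncurry_apply_pair,
      Sym2.eq_iff, Sym2.mk_isDiag_iff, Sym2.mem_iff, forall_eq_or_imp, forall_eq]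
    aesop

def edgeMonomial {V : Type*} (x : V → ZMod 2) : Sym2 V → ZMod 2 :=
  Sym2.lift ⟨fun a b => x a * x b, fun _ _ => mul_comm _ _⟩

@[simp] lemma edgeMonomial_mk {V : Type*} (x : V → ZMod 2) (a b : V) :
    edgeMonomial x s(a, b) = x a * x b := rfl

section EdgePhase

variable {V : Type*} [Fintype V] [DecidableEq V] (G : SimpleGraph V) [DecidableRel G.Adj]
  (i : V) (x : V → ZMod 2)

lemma edgePhase_eq_sum : edgePhase G x = ∑ e ∈ G.edgeFinset, edgeMonomial x e := rfl

lemma edgePhase_eq_mul_add :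
    edgePhase G x = x i * ∑ j ∈ G.neighborFinset i, x j
      + ∑ e ∈ G.edgeFinset with i ∉ e, edgeMonomial x e := by
  have hincident :
      {e ∈ G.edgeFinset | i ∈ e} = (G.neighborFinset i).image (fun j => s(i, j)) := by
    ext e
    induction e using Sym2.ind with
    | _ a b =>
      simp only [mem_filter, mem_image, SimpleGraph.mem_edgeFinset, SimpleGraph.mem_edgeSet,
        SimpleGraph.mem_neighborFinset, Sym2.mem_iff, Sym2.eq_iff]
      constructor
      · rintro ⟨h, rfl | rfl⟩
        · exact ⟨b, h, .inl ⟨rfl, rfl⟩⟩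
        · exact ⟨a, h.symm, .inr ⟨rfl, rfl⟩⟩
      · rintro ⟨j, h, ⟨rfl, rfl⟩ | ⟨rfl, rfl⟩⟩
        · exact ⟨h, .inl rfl⟩
        · exact ⟨h.symm, .inr rfl⟩
  rw [edgePhase_eq_sum, ← sum_filter_add_sum_filter_not _ (fun e => i ∈ e), hincident,
    sum_image fun _ _ _ _ h => Sym2.congr_right.mp h, mul_sum]
  rfl

lemma edgePhase_update (t : ZMod 2) :
    edgePhase G (Function.update x i t)
      = edgePhase G x + (t - x i) * #{j ∈ G.neighborFinset i | x j = 1} := by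
  have hnbr : ∀ j ∈ G.neighborFinset i, Function.update x i t j = x j := fun j hj =>
    Function.update_of_ne (G.ne_of_adj ((G.mem_neighborFinset i j).mp hj)).symm _ _
  have hrest : ∀ e ∈ {e ∈ G.edgeFinset | i ∉ e},
      edgeMonomial (Function.update x i t) e = edgeMonomial x e := by
    intro e he
    induction e using Sym2.ind with
    | _ a b =>
      simp only [mem_filter, Sym2.mem_iff, not_or] at he
      simp [Function.update_of_ne (Ne.symm he.2.1), Function.update_of_ne (Ne.symm he.2.2)]
  rw [edgePhase_eq_mul_add G i, edgePhase_eq_mul_add G i, sum_congr rfl hnbr, sum_congr rfl hrest,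
    Function.update_self, sum_zmod_two_eq_card_filter]
  ring

lemma edgeFinset_localComp :
    (localComp G i).edgeFinset
      = symmDiff G.edgeFinset ((G.neighborFinset i).offDiag.image Sym2.mk.uncurry) := by
  ext e
  induction e using Sym2.ind with
  | _ a b =>
    rw [mem_symmDiff, Sym2.mem_image_offDiag_iff]
    simp only [SimpleGraph.mem_edgeFinset, SimpleGraph.mem_edgeSet, Sym2.mk_isDiag_iff,
      Sym2.mem_iff, forall_eq_or_imp, forall_eq, SimpleGraph.mem_neighborFinset]
    exact xor_def

lemma sum_edgeMonomial_image_offDiag (s : Finset V) :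
    ∑ e ∈ s.offDiag.image Sym2.mk.uncurry, edgeMonomial x e
      = (#{j ∈ s | x j = 1}).choose 2 := by
  have hmono : ∀ e : Sym2 V, edgeMonomial x e = if ∀ a ∈ e, x a = 1 then 1 else 0 := by
    intro e
    induction e using Sym2.ind with
    | _ a b =>
      rcases zmod_two_cases (x a) with ha | ha <;> rcases zmod_two_cases (x b) with hb | hb <;>
        simp [ha, hb]
  have hpairs : {e ∈ s.offDiag.image Sym2.mk.uncurry | ∀ a ∈ e, x a = 1}
      = {j ∈ s | x j = 1}.offDiag.image Sym2.mk.uncurry := by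
    ext e
    simp only [mem_filter, Sym2.mem_image_offDiag_iff]
    aesop
  rw [sum_congr rfl fun e _ => hmono e, ← natCast_card_filter, hpairs, Sym2.card_image_offDiag]

lemma edgePhase_localComp :
    edgePhase (localComp G i) x
      = edgePhase G x + (#{j ∈ G.neighborFinset i | x j = 1}).choose 2 := by
  rw [edgePhase_eq_sum, edgeFinset_localComp, sum_symmDiff, sum_edgeMonomial_image_offDiag]
  rfl

end EdgePhase

lemma neg_I_pow_mul_eq_neg_one_pow_choose_two (m : ℕ) :
    (-I) ^ m * (1 - I * (-1) ^ m) = (1 - I) * (-1) ^ m.choose 2 := by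
  induction m with
  | zero => simp
  | succ m ih =>
    have hs : ((-1 : ℂ) ^ m) ^ 2 = 1 := by rw [← pow_mul, mul_comm, pow_mul]; norm_num
    rw [Nat.choose_succ_succ, Nat.choose_one_right, pow_add, pow_succ, pow_succ]
    linear_combination (-1) ^ m * ih + I * (-I) ^ m * hs
      - (-I) ^ m * (-1) ^ m * Complex.I_sq

lemma sum_sqrtNegIX_apply_mul_sgn (a E S : ZMod 2) :
    ∑ t, ((Real.sqrt 2 : ℂ)⁻¹ • (1 - I • PX)) a t * sgn (E + (t - a) * S)
      = (Real.sqrt 2 : ℂ)⁻¹ * sgn E * (1 - I * sgn S) := by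
  rw [show (univ : Finset (ZMod 2)) = {0, 1} from rfl, sum_pair (by decide)]
  rcases zmod_two_cases a with rfl | rfl <;> rcases zmod_two_cases E with rfl | rfl <;>
    rcases zmod_two_cases S with rfl | rfl <;> simp +decide [PX, sgn, one_apply] <;> ring

lemma prod_sqrtIZ_diagonal {α : Type*} (s : Finset α) (x : α → ZMod 2) :
    ∏ j ∈ s, (Real.sqrt 2 : ℂ)⁻¹ * (1 + I * sgn (x j))
      = ((Real.sqrt 2 : ℂ)⁻¹ * (1 + I)) ^ #s * (-I) ^ #{j ∈ s | x j = 1} := by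
  have hfactor : ∀ j, (Real.sqrt 2 : ℂ)⁻¹ * (1 + I * sgn (x j))
      = (Real.sqrt 2 : ℂ)⁻¹ * (1 + I) * (-I) ^ (if x j = 1 then 1 else 0) := by
    intro j
    rcases zmod_two_cases (x j) with h | h
    · simp [h, sgn]
    · simp [h, sgn]
      linear_combination (Real.sqrt 2 : ℂ)⁻¹ * Complex.I_sq
  rw [prod_congr rfl fun j _ => hfactor j, prod_mul_distrib, prod_const, prod_pow_eq_pow_sum,
    card_filter]

lemma star_mul_self_inv_sqrt_two_mul {z : ℂ} (hz : star z * z = 2) :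
    star ((Real.sqrt 2 : ℂ)⁻¹ * z) * ((Real.sqrt 2 : ℂ)⁻¹ * z) = 1 := by
  have hsq : ((Real.sqrt 2 : ℂ)) ^ 2 = 2 := by
    rw [← Complex.ofReal_pow, Real.sq_sqrt zero_le_two]; norm_num
  have hne : (Real.sqrt 2 : ℂ) ≠ 0 := by
    exact_mod_cast (Real.sqrt_pos.mpr two_pos).ne'
  rw [star_mul', star_inv₀,
    show star (Real.sqrt 2 : ℂ) = Real.sqrt 2 from Complex.conj_ofReal _]
  field_simp
  linear_combination hz - hsq

lemma localCompU_mulVec_graphState {V : Type*} [Fintype V] [DecidableEq V] (G : SimpleGraph V)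
    [DecidableRel G.Adj] (i : V) :
    localCompU G i *ᵥ graphState G
      = (((Real.sqrt 2 : ℂ)⁻¹ * (1 + I)) ^ #(G.neighborFinset i)
          * ((Real.sqrt 2 : ℂ)⁻¹ * (1 - I))) • graphState (localComp G i) := by
  funext x
  set m := #{j ∈ G.neighborFinset i | x j = 1}
  set δ : V → ZMod 2 → ℂ := fun j t =>
    if G.Adj i j then (Real.sqrt 2 : ℂ)⁻¹ * (1 + I * sgn t) else 1
  have hdiag : ∀ j ≠ i, (if j = i then (Real.sqrt 2 : ℂ)⁻¹ • (1 - I • PX)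
      else if G.Adj i j then (Real.sqrt 2 : ℂ)⁻¹ • (1 + I • PZ) else 1) = diagonal (δ j) := by
    intro j hj
    ext a b
    by_cases hab : a = b <;> by_cases hij : G.Adj i j <;>
      simp [δ, hj, hij, hab, PZ, one_apply]
  have hprod : ∏ j ∈ univ.erase i, δ j (x j)
      = ((Real.sqrt 2 : ℂ)⁻¹ * (1 + I)) ^ #(G.neighborFinset i) * (-I) ^ m := by
    rw [prod_erase _ (by simp [δ]), ← prod_filter, ← SimpleGraph.neighborFinset_eq_filter,
      prod_sqrtIZ_diagonal]
  have hsum : ∑ t, ((Real.sqrt 2 : ℂ)⁻¹ • (1 - I • PX)) (x i) t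
        * graphState G (Function.update x i t)
      = (Real.sqrt 2 : ℂ)⁻¹ ^ Fintype.card V
        * ((Real.sqrt 2 : ℂ)⁻¹ * sgn (edgePhase G x) * (1 - I * (-1) ^ m)) := by
    simp only [graphState, edgePhase_update, mul_left_comm _ ((Real.sqrt 2 : ℂ)⁻¹ ^ _),
      ← mul_sum, sum_sqrtNegIX_apply_mul_sgn, sgn_natCast]
    rfl
  rw [localCompU, tensorOp_mulVec_of_forall_ne_diagonal _ i δ hdiag, if_pos rfl, hprod, hsum,
    Pi.smul_apply, smul_eq_mul, graphState, edgePhase_localComp, sgn_add, sgn_natCast]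
  linear_combination ((Real.sqrt 2 : ℂ)⁻¹ * (1 + I)) ^ #(G.neighborFinset i)
    * (Real.sqrt 2 : ℂ)⁻¹ ^ Fintype.card V * (Real.sqrt 2 : ℂ)⁻¹ * sgn (edgePhase G x)
    * neg_I_pow_mul_eq_neg_one_pow_choose_two m

/-- Local complementation by local unitaries:
`U |G⟩⟨G| U† = |τ_i(G)⟩⟨τ_i(G)|`, i.e. `U|G⟩` equals the graph state `|τ_i(G)⟩`
up to a global phase. -/
theorem local_complementation_by_local_unitaries {n : ℕ} (G : SimpleGraph (Fin n))
    [DecidableRel G.Adj] (i : Fin n) :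
    localCompU G i * outer (graphState G) * (localCompU G i)ᴴ
      = outer (graphState (localComp G i)) := by
  set ω : ℂ := (Real.sqrt 2 : ℂ)⁻¹ * (1 + I)
  set ω' : ℂ := (Real.sqrt 2 : ℂ)⁻¹ * (1 - I)
  have hω : star ω * ω = 1 :=
    star_mul_self_inv_sqrt_two_mul (by simp [Complex.ext_iff]; norm_num)
  have hω' : star ω' * ω' = 1 :=
    star_mul_self_inv_sqrt_two_mul (by simp [Complex.ext_iff]; norm_num)
  have hphase : star (ω ^ #(G.neighborFinset i) * ω') * (ω ^ #(G.neighborFinset i) * ω') = 1 := by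
    rw [star_mul', star_pow, mul_mul_mul_comm, ← mul_pow, hω, hω', one_pow, one_mul]
  rw [mul_outer_mul_conjTranspose, localCompU_mulVec_graphState,
    outer_smul_of_star_mul_self hphase]
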